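/- arXiv:1803.11415 — 10 statements merged into one kernel-verified Lean document; each statement's English description precedes it below -/
import Mathlib

section
/- Let π, τ ∈ S_n with a fixed point k₀ of π (i.e. π(k₀) = k₀) such that τ(k₀) ≠ k₀, and let E = E^n_{π,τ} be the evolution algebra with e_i·e_i = a_{iπ(i)} e_{π(i)} + a_{iτ(i)} e_{τ(i)} and e_i·e_j = 0 for i ≠ j. If a_{k₀k₀} ≠ 0 and a_{τ⁻¹(k₀),k₀} = 0, then the linear map σ(x) = a_{k₀k₀} · x_{k₀} (where x = Σ x_i e_i) is a nonzero algebra homomorphism E → ℝ; in particular E is a baric algebra. -/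
/-- Multiplication of the evolution algebra `E^n_{π,τ}` in coordinates:
`e i * e i = a i (π i) • e (π i) + a i (τ i) • e (τ i)`, `e i * e j = 0` for `i ≠ j`. -/
noncomputable def evolMul {n : ℕ} (π τ : Equiv.Perm (Fin n)) (a : Fin n → Fin n → ℝ)
    (x y : Fin n → ℝ) : Fin n → ℝ :=
  fun k => ∑ i, x i * y i *
    ((if π i = k then a i (π i) else 0) + (if τ i = k then a i (τ i) else 0))

/-- If `k₀` is a fixed point of `π`, not of `τ`, `a k₀ k₀ ≠ 0` and `a (τ⁻¹ k₀) k₀ = 0`,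
then `σ x = a k₀ k₀ * x k₀` is a nonzero algebra homomorphism `E^n_{π,τ} → ℝ`,
so `E^n_{π,τ}` is baric. -/
theorem stmt1 {n : ℕ} (π τ : Equiv.Perm (Fin n)) (a : Fin n → Fin n → ℝ) (k₀ : Fin n)
    (hπ : π k₀ = k₀) (hτ : τ k₀ ≠ k₀)
    (ha : a k₀ k₀ ≠ 0) (ha' : a (τ.symm k₀) k₀ = 0) :
    (∀ x y : Fin n → ℝ,
        a k₀ k₀ * (evolMul π τ a x y) k₀ = (a k₀ k₀ * x k₀) * (a k₀ k₀ * y k₀)) ∧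
    (∀ x y : Fin n → ℝ, a k₀ k₀ * (x + y) k₀ = a k₀ k₀ * x k₀ + a k₀ k₀ * y k₀) ∧
    (∀ (c : ℝ) (x : Fin n → ℝ), a k₀ k₀ * (c • x) k₀ = c * (a k₀ k₀ * x k₀)) ∧
    (∃ x : Fin n → ℝ, a k₀ k₀ * x k₀ ≠ 0) := by
  refine ⟨?_, fun x y => by simp [Pi.add_apply]; ring,
    fun c x => by simp [Pi.smul_apply]; ring,
    ⟨fun _ => 1, by simpa using ha⟩⟩
  intro x y
  have hsum : (evolMul π τ a x y) k₀ = x k₀ * y k₀ * a k₀ k₀ := by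
    unfold evolMul
    rw [Finset.sum_eq_single k₀]
    · rw [hπ, if_pos rfl, if_neg hτ, add_zero]
    · intro i _ hi
      have h1 : π i ≠ k₀ := fun h => hi (by simpa [hπ] using π.injective (h.trans hπ.symm))
      rw [if_neg h1]
      by_cases h2 : τ i = k₀
      · have : i = τ.symm k₀ := by rw [← h2]; simp
        rw [if_pos h2, h2, this, ha']; ring
      · rw [if_neg h2]; ring
    · intro h; exact absurd (Finset.mem_univ k₀) h
  rw [hsum]; ring
end

section
/- Let π, τ ∈ S_n and k₀ be a common fixed point of π and τ (π(k₀) = τ(k₀) = k₀). If a_{k₀k₀} ≠ 0, then σ(x) = 2 a_{k₀k₀} x_{k₀} is a nonzero algebra homomorphism E^n_{π,τ} → ℝ, so E^n_{π,τ} is baric. -/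
/-- If `k₀` is a common fixed point of `π` and `τ` and `a k₀ k₀ ≠ 0`, then
`σ x = 2 * a k₀ k₀ * x k₀` is a nonzero algebra homomorphism `E^n_{π,τ} → ℝ`,
so `E^n_{π,τ}` is baric. -/
theorem stmt2 {n : ℕ} (π τ : Equiv.Perm (Fin n)) (a : Fin n → Fin n → ℝ) (k₀ : Fin n)
    (hπ : π k₀ = k₀) (hτ : τ k₀ = k₀) (ha : a k₀ k₀ ≠ 0) :
    (∀ x y : Fin n → ℝ,
        2 * a k₀ k₀ * (evolMul π τ a x y) k₀ =
          (2 * a k₀ k₀ * x k₀) * (2 * a k₀ k₀ * y k₀)) ∧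
    (∀ x y : Fin n → ℝ,
        2 * a k₀ k₀ * (x + y) k₀ = 2 * a k₀ k₀ * x k₀ + 2 * a k₀ k₀ * y k₀) ∧
    (∀ (c : ℝ) (x : Fin n → ℝ), 2 * a k₀ k₀ * (c • x) k₀ = c * (2 * a k₀ k₀ * x k₀)) ∧
    (∃ x : Fin n → ℝ, 2 * a k₀ k₀ * x k₀ ≠ 0) := by
  refine ⟨?_, ?_, ?_, ?_⟩
  · intro x y
    have key : (evolMul π τ a x y) k₀ = x k₀ * y k₀ * (2 * a k₀ k₀) := by
      unfold evolMul
      rw [Finset.sum_eq_single k₀]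
      · rw [hπ, hτ]; simp only [if_pos (rfl : k₀ = k₀), if_true]; ring
      · intro i _ hi
        have h1 : π i ≠ k₀ := fun h => hi (π.injective (h.trans hπ.symm))
        have h2 : τ i ≠ k₀ := fun h => hi (τ.injective (h.trans hτ.symm))
        rw [if_neg h1, if_neg h2]; ring
      · intro h; exact absurd (Finset.mem_univ k₀) h
    rw [key]; ring
  · intro x y; simp [Pi.add_apply]; ring
  · intro c x; simp [Pi.smul_apply]; ring
  · exact ⟨fun _ => 1, by simpa using ha⟩
end

section
/- Let π, τ ∈ S_n and suppose that for every k ∈ {1,...,n}, a_{k,π(k)} · a_{j_k,π(k)} > 0 where j_k = τ⁻¹(π(k)). Then the only absolute nilpotent element of E^n_{π,τ} is 0. -/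
/-- If `a_{k,π(k)} * a_{j_k,π(k)} > 0` for all `k` (`j_k = τ⁻¹(π k)`), then the
only absolute nilpotent element of `E^n_{π,τ}` is `0`. -/
theorem stmt4 {n : ℕ} (π τ : Equiv.Perm (Fin n)) (a : Fin n → Fin n → ℝ)
    (ha : ∀ k, a k (π k) * a (τ.symm (π k)) (π k) > 0)
    (x : Fin n → ℝ) (hx : evolMul π τ a x x = 0) : x = 0 := by
  funext k
  have h := congrFun hx (π k)
  simp only [evolMul, Pi.zero_apply] at h
  set j := τ.symm (π k) with hj
  have htj : τ j = π k := τ.apply_symm_apply _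
  have h1 : ∀ i : Fin n, (π i = π k) = (i = k) := by
    intro i; simp [π.injective.eq_iff]
  have h2 : ∀ i : Fin n, (τ i = π k) = (i = j) := by
    intro i; rw [hj]
    simp [Equiv.eq_symm_apply]
  have h' : x k * x k * a k (π k) + x j * x j * a j (π k) = 0 := by
    rw [show (0:ℝ) = ∑ i : Fin n, x i * x i *
        ((if π i = π k then a i (π i) else 0) + (if τ i = π k then a i (τ i) else 0))
      from h.symm]
    simp only [mul_add, Finset.sum_add_distrib, h1, h2, mul_ite, mul_zero,
      Finset.sum_ite_eq', Finset.mem_univ, if_true]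
    simp [htj]
  have hpos := ha k
  rw [← hj] at hpos
  have hk2 : x k * x k = 0 := by
    have hle : x k * x k ≤ 0 := by
      have h'' := congrArg (· * a j (π k)) h'
      simp only [zero_mul] at h''
      nlinarith [mul_self_nonneg (x j * a j (π k)), hpos]
    linarith [mul_self_nonneg (x k)]
  simpa using mul_self_eq_zero.mp hk2
end

section
/- Let (l_1, l_2, ..., l_p) be a cycle of the permutation πτ⁻¹ (so l_{k+1} = τ⁻¹(π(l_k)), indices mod p), and suppose a_{l_k, π(l_k)} · a_{l_k, τ(l_k)} ≠ 0 for all k = 1,...,p. If x* is an absolute nilpotent element of E^n_{π,τ}, then either x*_{l_1} = x*_{l_2} = ... = x*_{l_p} = 0 or all x*_{l_k} are nonzero (i.e. the product x*_{l_1}···x*_{l_p} ≠ 0). -/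
/-- Along a cycle `(l 1, ..., l p)` of `π τ⁻¹` (so `τ (l (k+1)) = π (l k)`), if
`a_{l_k,π(l_k)} * a_{l_k,τ(l_k)} ≠ 0` for all `k`, then any absolute nilpotent `x`
has either all coordinates `x (l k)` zero or all nonzero. -/
theorem stmt5 {n : ℕ} (π τ : Equiv.Perm (Fin n)) (a : Fin n → Fin n → ℝ)
    (p : ℕ) (hp : 1 ≤ p) (l : ℕ → Fin n)
    (hinj : ∀ i j, 1 ≤ i → i ≤ p → 1 ≤ j → j ≤ p → l i = l j → i = j)
    (hwrap : l (p + 1) = l 1)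
    (hcyc : ∀ k, 1 ≤ k → k ≤ p → π (l k) = τ (l (k + 1)))
    (ha : ∀ k, 1 ≤ k → k ≤ p → a (l k) (π (l k)) * a (l k) (τ (l k)) ≠ 0)
    (x : Fin n → ℝ) (hx : evolMul π τ a x x = 0) :
    (∀ k, 1 ≤ k → k ≤ p → x (l k) = 0) ∨ (∀ k, 1 ≤ k → k ≤ p → x (l k) ≠ 0) := by
  -- key equation along the cycle
  have key : ∀ k, 1 ≤ k → k ≤ p →
      x (l k) * x (l k) * a (l k) (π (l k)) +
      x (l (k+1)) * x (l (k+1)) * a (l (k+1)) (τ (l (k+1))) = 0 := by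
    intro k hk1 hkp
    have h := congrFun hx (π (l k))
    simp only [evolMul, Pi.zero_apply, mul_add, Finset.sum_add_distrib, mul_ite,
      mul_zero] at h
    have s1 : (∑ i : Fin n, if π i = π (l k) then x i * x i * a i (π i) else 0)
        = x (l k) * x (l k) * a (l k) (π (l k)) := by
      rw [Finset.sum_eq_single (l k)]
      · simp
      · intro i _ hi
        rw [if_neg]
        simp [Equiv.apply_eq_iff_eq, hi]
      · simp
    have s2 : (∑ i : Fin n, if τ i = π (l k) then x i * x i * a i (τ i) else 0)
        = x (l (k+1)) * x (l (k+1)) * a (l (k+1)) (τ (l (k+1))) := by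
      rw [Finset.sum_eq_single (l (k+1))]
      · rw [if_pos (hcyc k hk1 hkp).symm]
      · intro i _ hi
        rw [if_neg]
        rw [hcyc k hk1 hkp]
        simp [Equiv.apply_eq_iff_eq, hi]
      · simp
    rw [s1, s2] at h
    exact h
  -- forward step
  have fwd : ∀ k, 1 ≤ k → k ≤ p → x (l k) = 0 → x (l (k+1)) = 0 := by
    intro k hk1 hkp h0
    have hA : a (l (k+1)) (τ (l (k+1))) ≠ 0 := by
      rcases eq_or_lt_of_le hkp with h | h
      · rw [h, hwrap]
        exact right_ne_zero_of_mul (ha 1 le_rfl hp)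
      · exact right_ne_zero_of_mul (ha (k+1) (Nat.le_add_left 1 k) h)
    have h := key k hk1 hkp
    rw [h0] at h
    simp only [zero_mul, mul_zero, zero_add] at h
    rcases mul_eq_zero.mp h with h | h
    · rcases mul_eq_zero.mp h with h | h <;> exact h
    · exact absurd h hA
  -- backward step
  have bwd : ∀ k, 1 ≤ k → k ≤ p → x (l (k+1)) = 0 → x (l k) = 0 := by
    intro k hk1 hkp h0
    have hA : a (l k) (π (l k)) ≠ 0 := left_ne_zero_of_mul (ha k hk1 hkp)
    have h := key k hk1 hkp
    rw [h0] at h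
    simp only [zero_mul, mul_zero, add_zero] at h
    rcases mul_eq_zero.mp h with h | h
    · rcases mul_eq_zero.mp h with h | h <;> exact h
    · exact absurd h hA
  by_cases hz : ∃ j, 1 ≤ j ∧ j ≤ p ∧ x (l j) = 0
  · left
    obtain ⟨j, hj1, hjp, hj0⟩ := hz
    have down : ∀ m, 1 ≤ j - m → x (l (j - m)) = 0 := by
      intro m
      induction m with
      | zero => intro _; simpa using hj0
      | succ m ih =>
        intro hm
        have hmj : m + 1 ≤ j := by omega
        have hk1 : 1 ≤ j - (m+1) := hm
        have hkp : j - (m+1) ≤ p := by omega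
        have heq : j - (m+1) + 1 = j - m := by omega
        have hxm : x (l (j - m)) = 0 := ih (by omega)
        have := bwd (j - (m+1)) hk1 hkp (by rw [heq]; exact hxm)
        exact this
    have h1 : x (l 1) = 0 := by
      have := down (j - 1) (by omega)
      rwa [Nat.sub_sub_self hj1] at this
    intro k hk1 hkp
    induction k with
    | zero => omega
    | succ k ih =>
      rcases Nat.eq_or_lt_of_le hk1 with h | h
      · rwa [← h]
      · have hk1' : 1 ≤ k := by omega
        have hkp' : k ≤ p := by omega
        exact fwd k hk1' hkp' (ih hk1' hkp')
  · right
    push_neg at hz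
    intro k hk1 hkp
    exact hz k hk1 hkp
end

section
/- Let (l_1,...,l_p) be a cycle of πτ⁻¹, with l_{k+1} = τ⁻¹(π(l_k)) and l_{p+1} = l_1. Suppose a_{l_s,π(l_s)} = 0 and a_{l_s,τ(l_s)} = 0 for some index s, while a_{l_k,π(l_k)} · a_{l_k,τ(l_k)} ≠ 0 for all k ≠ s. Then for any absolute nilpotent x* of E^n_{π,τ}, x*_{l_k} = 0 for all k ≠ s, while x*_{l_s} may be an arbitrary real number (i.e. the restriction of the nilpotency equations to this cycle holds iff x*_{l_k} = 0 for all k ≠ s). -/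
/-- Along a cycle `(l 1, ..., l p)` of `π τ⁻¹`, if the two structure constants at
`l s` vanish while `a_{l_k,π(l_k)} * a_{l_k,τ(l_k)} ≠ 0` for `k ≠ s`, then any
absolute nilpotent `x` has `x (l k) = 0` for `k ≠ s`, with `x (l s)` arbitrary:
the nilpotency equations restricted to the cycle hold iff `x (l k) = 0` for all
`k ≠ s`. -/
theorem stmt6 {n : ℕ} (π τ : Equiv.Perm (Fin n)) (a : Fin n → Fin n → ℝ)
    (p : ℕ) (hp : 1 ≤ p) (l : ℕ → Fin n)
    (hinj : ∀ i j, 1 ≤ i → i ≤ p → 1 ≤ j → j ≤ p → l i = l j → i = j)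
    (hwrap : l (p + 1) = l 1)
    (hcyc : ∀ k, 1 ≤ k → k ≤ p → π (l k) = τ (l (k + 1)))
    (s : ℕ) (hs1 : 1 ≤ s) (hsp : s ≤ p)
    (hzπ : a (l s) (π (l s)) = 0) (hzτ : a (l s) (τ (l s)) = 0)
    (ha : ∀ k, 1 ≤ k → k ≤ p → k ≠ s → a (l k) (π (l k)) * a (l k) (τ (l k)) ≠ 0)
    (x : Fin n → ℝ) :
    (evolMul π τ a x x = 0 → ∀ k, 1 ≤ k → k ≤ p → k ≠ s → x (l k) = 0) ∧
    ((∀ k, 1 ≤ k → k ≤ p →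
        a (l k) (π (l k)) * x (l k) ^ 2 +
          a (l (k + 1)) (τ (l (k + 1))) * x (l (k + 1)) ^ 2 = 0) ↔
      (∀ k, 1 ≤ k → k ≤ p → k ≠ s → x (l k) = 0)) := by
 classical
  -- coordinate extraction lemma
  have hcoord : ∀ k, 1 ≤ k → k ≤ p → evolMul π τ a x x (π (l k)) =
      a (l k) (π (l k)) * x (l k) ^ 2 +
        a (l (k + 1)) (τ (l (k + 1))) * x (l (k + 1)) ^ 2 := by
    intro k hk1 hk2
    unfold evolMul
    have e1 : ∀ i : Fin n, (π i = π (l k)) = (i = l k) := fun i => by simp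
    have e2 : ∀ i : Fin n, (τ i = π (l k)) = (i = l (k + 1)) := fun i => by
      rw [hcyc k hk1 hk2]; simp
    simp only [mul_add, Finset.sum_add_distrib, mul_ite, mul_zero, e1, e2,
      Finset.sum_ite_eq', Finset.mem_univ, if_true]
    ring
  -- forward direction
  have hfwd : (∀ k, 1 ≤ k → k ≤ p →
        a (l k) (π (l k)) * x (l k) ^ 2 +
          a (l (k + 1)) (τ (l (k + 1))) * x (l (k + 1)) ^ 2 = 0) →
      ∀ k, 1 ≤ k → k ≤ p → k ≠ s → x (l k) = 0 := by
    intro hE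
    have key : ∀ j, 1 ≤ j → j ≤ p - 1 → ∀ k, 1 ≤ k → k ≤ p →
        (k = s + j ∨ k + p = s + j) → x (l k) = 0 := by
      intro j
      induction j with
      | zero => intro h; omega
      | succ j ih =>
        intro _ hj2 k hk1 hk2 hk3
        obtain ⟨k', hk'1, hk'2, hk'prev, hk'link⟩ :
            ∃ k', 1 ≤ k' ∧ k' ≤ p ∧ (k' = s + j ∨ k' + p = s + j) ∧
              l (k' + 1) = l k := by
          by_cases hk : 2 ≤ k
          · exact ⟨k - 1, by omega, by omega, by omega,
              by rw [show k - 1 + 1 = k by omega]⟩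
          · refine ⟨p, hp, le_refl p, by omega, ?_⟩
            rw [hwrap]
            congr 1
            omega
        have hE' := hE k' hk'1 hk'2
        rw [hk'link] at hE'
        have h1 : a (l k') (π (l k')) * x (l k') ^ 2 = 0 := by
          by_cases hj0 : j = 0
          · have hks' : k' = s := by omega
            rw [hks', hzπ]; ring
          · rw [ih (by omega) (by omega) k' hk'1 hk'2 hk'prev]; ring
        have h2 : a (l k) (τ (l k)) * x (l k) ^ 2 = 0 := by linarith
        have hks : k ≠ s := by omega
        have hne := ha k hk1 hk2 hks
        have hx2 : x (l k) ^ 2 = 0 := by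
          rcases mul_eq_zero.mp h2 with h | h
          · exact absurd (by rw [h]; ring) hne
          · exact h
        exact pow_eq_zero_iff (two_ne_zero) |>.mp hx2
    intro k hk1 hk2 hks
    by_cases h : s < k
    · exact key (k - s) (by omega) (by omega) k hk1 hk2 (by omega)
    · exact key (k + p - s) (by omega) (by omega) k hk1 hk2 (by omega)
  constructor
  · intro hmul
    apply hfwd
    intro k hk1 hk2
    have := hcoord k hk1 hk2
    rw [hmul] at this
    simpa using this.symm
  constructor
  · exact hfwd
  · -- backward direction
    intro hx k hk1 hk2
    have h1 : a (l k) (π (l k)) * x (l k) ^ 2 = 0 := by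
      by_cases hks : k = s
      · rw [hks, hzπ]; ring
      · rw [hx k hk1 hk2 hks]; ring
    have h2 : a (l (k + 1)) (τ (l (k + 1))) * x (l (k + 1)) ^ 2 = 0 := by
      by_cases hkp : k = p
      · rw [hkp, hwrap]
        by_cases hs : s = 1
        · rw [← hs, hzτ]; ring
        · rw [hx 1 le_rfl hp (by omega)]; ring
      · by_cases hks : k + 1 = s
        · rw [hks, hzτ]; ring
        · rw [hx (k + 1) (by omega) (by omega) hks]; ring
    linarith
end

section
/- Let (l_1,...,l_p) be a cycle of πτ⁻¹ with l_{k+1} = τ⁻¹(π(l_k)). Suppose a_{l_s,π(l_s)} = 0 for some s while a_{l_m,τ(l_m)} ≠ 0 for all m = 1,...,p. Then any absolute nilpotent element x* of E^n_{π,τ} satisfies x*_{l_1} = x*_{l_2} = ... = x*_{l_p} = 0. -/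
/-- Along a cycle `(l 1, ..., l p)` of `π τ⁻¹`, if `a_{l_s,π(l_s)} = 0` for some `s`
while `a_{l_m,τ(l_m)} ≠ 0` for all `m`, then any absolute nilpotent `x` satisfies
`x (l k) = 0` for all `k` in the cycle. -/
theorem stmt7 {n : ℕ} (π τ : Equiv.Perm (Fin n)) (a : Fin n → Fin n → ℝ)
    (p : ℕ) (hp : 1 ≤ p) (l : ℕ → Fin n)
    (hinj : ∀ i j, 1 ≤ i → i ≤ p → 1 ≤ j → j ≤ p → l i = l j → i = j)
    (hwrap : l (p + 1) = l 1)
    (hcyc : ∀ k, 1 ≤ k → k ≤ p → π (l k) = τ (l (k + 1)))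
    (s : ℕ) (hs1 : 1 ≤ s) (hsp : s ≤ p)
    (hzπ : a (l s) (π (l s)) = 0)
    (ha : ∀ m, 1 ≤ m → m ≤ p → a (l m) (τ (l m)) ≠ 0)
    (x : Fin n → ℝ) (hx : evolMul π τ a x x = 0) :
    ∀ k, 1 ≤ k → k ≤ p → x (l k) = 0 := by
  -- The basic equations along the cycle
  have key : ∀ k, 1 ≤ k → k ≤ p →
      a (l k) (π (l k)) * (x (l k) * x (l k)) +
        a (l (k+1)) (τ (l (k+1))) * (x (l (k+1)) * x (l (k+1))) = 0 := by
    intro k hk1 hkp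
    have h0 := congrFun hx (π (l k))
    simp only [evolMul, Pi.zero_apply, mul_add] at h0
    rw [Finset.sum_add_distrib] at h0
    have e1 : (∑ i, x i * x i * (if π i = π (l k) then a i (π i) else 0))
        = x (l k) * x (l k) * a (l k) (π (l k)) := by
      rw [Finset.sum_eq_single (l k)]
      · simp
      · intro b _ hb
        have : π b ≠ π (l k) := fun h => hb (π.injective h)
        simp [this]
      · simp
    have e2 : (∑ i, x i * x i * (if τ i = π (l k) then a i (τ i) else 0))
        = x (l (k+1)) * x (l (k+1)) * a (l (k+1)) (τ (l (k+1))) := by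
      have hc := hcyc k hk1 hkp
      rw [Finset.sum_eq_single (l (k+1))]
      · simp [hc]
      · intro b _ hb
        have : τ b ≠ π (l k) := by
          rw [hc]; exact fun h => hb (τ.injective h)
        simp [this]
      · simp
    rw [e1, e2] at h0
    linarith
  -- one propagation step, with wrap-around
  have step : ∀ k, 1 ≤ k → k ≤ p →
      a (l k) (π (l k)) * (x (l k) * x (l k)) = 0 → x (l (k % p + 1)) = 0 := by
    intro k hk1 hkp h0
    have hk := key k hk1 hkp
    rw [h0, zero_add] at hk
    rcases eq_or_lt_of_le hkp with heq | hlt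
    · subst heq
      rw [hwrap] at hk
      have := ha 1 le_rfl hp
      have hx2 : x (l 1) * x (l 1) = 0 := by
        rcases mul_eq_zero.mp hk with h | h
        · exact absurd h this
        · exact h
      have : k % k = 0 := Nat.mod_self k
      rw [this]
      exact mul_self_eq_zero.mp hx2
    · have hk1p : 1 ≤ k + 1 := by omega
      have hkp1 : k + 1 ≤ p := hlt
      have := ha (k+1) hk1p hkp1
      have hx2 : x (l (k+1)) * x (l (k+1)) = 0 := by
        rcases mul_eq_zero.mp hk with h | h
        · exact absurd h this
        · exact h
      have hm : k % p = k := Nat.mod_eq_of_lt (by omega)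
      rw [hm]
      exact mul_self_eq_zero.mp hx2
  -- starting point
  have base : x (l (s % p + 1)) = 0 := by
    apply step s hs1 hsp
    rw [hzπ, zero_mul]
  -- propagate around the cycle
  have chain : ∀ j, x (l ((s + j) % p + 1)) = 0 := by
    intro j
    induction j with
    | zero => simpa using base
    | succ j ih =>
      have h1 : 1 ≤ (s + j) % p + 1 := by omega
      have h2 : (s + j) % p + 1 ≤ p := Nat.mod_lt _ (by omega)
      have hz : a (l ((s + j) % p + 1)) (π (l ((s + j) % p + 1))) *
          (x (l ((s + j) % p + 1)) * x (l ((s + j) % p + 1))) = 0 := by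
        rw [ih]; ring
      have := step _ h1 h2 hz
      have hmod : ((s + j) % p + 1) % p = (s + (j + 1)) % p := by
        rw [Nat.mod_add_mod]; ring_nf
      rwa [hmod] at this
  intro k hk1 hkp
  set j := p + (k - 1) - s % p with hj
  have hdm := Nat.div_add_mod s p
  have hsj : s + j = (k - 1) + p * (s / p + 1) := by
    have hlt : s % p < p := Nat.mod_lt _ (by omega)
    have hexp : p * (s / p + 1) = p * (s / p) + p := by ring
    omega
  have : (s + j) % p = k - 1 := by
    rw [hsj, Nat.add_mul_mod_self_left, Nat.mod_eq_of_lt (by omega)]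
  have hc := chain j
  rw [this] at hc
  have : k - 1 + 1 = k := by omega
  rwa [this] at hc
end

section
/- Let (l_1,...,l_p) be a cycle of πτ⁻¹ (with l_{p+1} = l_1). Suppose a_{l_k,π(l_k)} · a_{l_{k+1},τ(l_{k+1})} ≠ 0 for all k = 1,...,p, and for some k₀, a_{l_{k₀},π(l_{k₀})} · a_{l_{k₀+1},τ(l_{k₀+1})} > 0. Then every absolute nilpotent element x* of E^n_{π,τ} satisfies x*_{l_1} = ... = x*_{l_p} = 0. -/
lemma keyeq {n : ℕ} (π τ : Equiv.Perm (Fin n)) (a : Fin n → Fin n → ℝ)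
    (x : Fin n → ℝ) (hx : evolMul π τ a x x = 0) (u v : Fin n) (h : π u = τ v) :
    a u (π u) * (x u * x u) + a v (τ v) * (x v * x v) = 0 := by
  have h1 := congrFun hx (π u)
  simp only [evolMul, Pi.zero_apply] at h1
  rw [show π u = τ v from h] at h1
  calc a u (π u) * (x u * x u) + a v (τ v) * (x v * x v)
      = ∑ i, x i * x i *
        ((if π i = τ v then a i (π i) else 0) + (if τ i = τ v then a i (τ i) else 0)) := by
        simp only [EmbeddingLike.apply_eq_iff_eq, ← h, mul_add, Finset.sum_add_distrib,
          mul_ite, mul_zero, Finset.sum_ite_eq', Finset.mem_univ, if_true]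
        rw [h]
        simp only [EmbeddingLike.apply_eq_iff_eq, mul_ite, mul_zero, Finset.sum_ite_eq',
          Finset.mem_univ, if_true]
        ring
    _ = 0 := h1

/-- Along a cycle `(l 1, ..., l p)` of `π τ⁻¹` with
`a_{l_k,π(l_k)} * a_{l_{k+1},τ(l_{k+1})} ≠ 0` for all `k` and `> 0` for some `k₀`,
every absolute nilpotent `x` satisfies `x (l k) = 0` for all `k` in the cycle. -/
theorem stmt8 {n : ℕ} (π τ : Equiv.Perm (Fin n)) (a : Fin n → Fin n → ℝ)
    (p : ℕ) (hp : 1 ≤ p) (l : ℕ → Fin n)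
    (hinj : ∀ i j, 1 ≤ i → i ≤ p → 1 ≤ j → j ≤ p → l i = l j → i = j)
    (hwrap : l (p + 1) = l 1)
    (hcyc : ∀ k, 1 ≤ k → k ≤ p → π (l k) = τ (l (k + 1)))
    (ha : ∀ k, 1 ≤ k → k ≤ p →
      a (l k) (π (l k)) * a (l (k + 1)) (τ (l (k + 1))) ≠ 0)
    (k₀ : ℕ) (hk₀1 : 1 ≤ k₀) (hk₀p : k₀ ≤ p)
    (hpos : a (l k₀) (π (l k₀)) * a (l (k₀ + 1)) (τ (l (k₀ + 1))) > 0)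
    (x : Fin n → ℝ) (hx : evolMul π τ a x x = 0) :
    ∀ k, 1 ≤ k → k ≤ p → x (l k) = 0 := by
  -- key equations along the cycle
  have key : ∀ k, 1 ≤ k → k ≤ p →
      a (l k) (π (l k)) * (x (l k) * x (l k)) +
      a (l (k + 1)) (τ (l (k + 1))) * (x (l (k + 1)) * x (l (k + 1))) = 0 :=
    fun k h1 h2 => keyeq π τ a x hx _ _ (hcyc k h1 h2)
  -- base: x (l k₀) = 0
  set c := a (l k₀) (π (l k₀)) with hc
  set d := a (l (k₀ + 1)) (τ (l (k₀ + 1))) with hd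
  have hkey0 := key k₀ hk₀1 hk₀p
  have hc0 : c ≠ 0 := left_ne_zero_of_mul (ne_of_gt hpos)
  have hd0 : d ≠ 0 := right_ne_zero_of_mul (ne_of_gt hpos)
  rw [← hc, ← hd] at hkey0
  have h5 : (c * c) * (x (l k₀) * x (l k₀)) =
      -((c * d) * (x (l (k₀ + 1)) * x (l (k₀ + 1)))) := by
    linear_combination c * hkey0
  have h6 : (c * c) * (x (l k₀) * x (l k₀)) ≤ 0 := by
    have := mul_nonneg hpos.le (mul_self_nonneg (x (l (k₀ + 1))))
    linarith
  have h7 : 0 ≤ (c * c) * (x (l k₀) * x (l k₀)) :=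
    mul_nonneg (mul_self_nonneg c) (mul_self_nonneg (x (l k₀)))
  have hbase : x (l k₀) = 0 := by
    have := le_antisymm h6 h7
    have h8 : x (l k₀) * x (l k₀) = 0 := by
      rcases mul_eq_zero.1 this with h | h
      · exact absurd h (mul_ne_zero hc0 hc0)
      · exact h
    exact mul_self_eq_zero.1 h8
  -- step: x (l k) = 0 → x (l (k+1)) = 0
  have step : ∀ k, 1 ≤ k → k ≤ p → x (l k) = 0 → x (l (k + 1)) = 0 := by
    intro k h1 h2 h0
    have hk := key k h1 h2
    rw [h0] at hk
    have hd' : a (l (k + 1)) (τ (l (k + 1))) ≠ 0 :=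
      right_ne_zero_of_mul (ha k h1 h2)
    have : x (l (k + 1)) * x (l (k + 1)) = 0 := by
      rcases mul_eq_zero.1 (by linarith : a (l (k + 1)) (τ (l (k + 1))) *
        (x (l (k + 1)) * x (l (k + 1))) = 0) with h | h
      · exact absurd h hd'
      · exact h
    exact mul_self_eq_zero.1 this
  -- forward from k₀ up to p+1
  have fwd : ∀ j, k₀ ≤ j → j ≤ p + 1 → x (l j) = 0 := by
    intro j
    induction j with
    | zero => omega
    | succ m ih =>
      intro h1 h2
      rcases Nat.lt_or_ge k₀ (m + 1) with hlt | hge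
      · exact step m (by omega) (by omega) (ih (by omega) (by omega))
      · have : k₀ = m + 1 := by omega
        rw [← this]; exact hbase
  have h1 : x (l 1) = 0 := hwrap ▸ fwd (p + 1) (by omega) le_rfl
  -- forward from 1
  have fwd2 : ∀ j, 1 ≤ j → j ≤ p + 1 → x (l j) = 0 := by
    intro j
    induction j with
    | zero => omega
    | succ m ih =>
      intro ha1 ha2
      rcases Nat.lt_or_ge 1 (m + 1) with hlt | hge
      · exact step m (by omega) (by omega) (ih (by omega) (by omega))
      · have : m = 0 := by omega
        rw [this]; exact h1
  exact fun k hk1 hk2 => fwd2 k hk1 (by omega)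
end

section
/- Let (l_1,...,l_p) be a cycle of πτ⁻¹ with l_{p+1} = l_1, and suppose a_{l_k,π(l_k)} · a_{l_{k+1},τ(l_{k+1})} < 0 for all k = 1,...,p. Then any absolute nilpotent x* of E^n_{π,τ} satisfies, for each k = 2,...,p: |x*_{l_k}| = sqrt( (−1)^{k−1} · (a_{l_1,π(l_1)} · a_{l_2,π(l_2)} ··· a_{l_{k−1},π(l_{k−1})}) / (a_{l_2,τ(l_2)} · a_{l_3,τ(l_3)} ··· a_{l_k,τ(l_k)}) ) · |x*_{l_1}|. -/
/-- Along a cycle `(l 1, ..., l p)` of `π τ⁻¹` with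
`a_{l_k,π(l_k)} * a_{l_{k+1},τ(l_{k+1})} < 0` for all `k`, any absolute nilpotent
`x` satisfies, for `k = 2, ..., p`,
`|x (l k)| = √((-1)^(k-1) · ∏_{i=1}^{k-1} a_{l_i,π(l_i)} / ∏_{i=2}^{k} a_{l_i,τ(l_i)}) · |x (l 1)|`. -/
theorem stmt9 {n : ℕ} (π τ : Equiv.Perm (Fin n)) (a : Fin n → Fin n → ℝ)
    (p : ℕ) (hp : 1 ≤ p) (l : ℕ → Fin n)
    (hinj : ∀ i j, 1 ≤ i → i ≤ p → 1 ≤ j → j ≤ p → l i = l j → i = j)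
    (hwrap : l (p + 1) = l 1)
    (hcyc : ∀ k, 1 ≤ k → k ≤ p → π (l k) = τ (l (k + 1)))
    (ha : ∀ k, 1 ≤ k → k ≤ p →
      a (l k) (π (l k)) * a (l (k + 1)) (τ (l (k + 1))) < 0)
    (x : Fin n → ℝ) (hx : evolMul π τ a x x = 0) :
    ∀ k, 2 ≤ k → k ≤ p →
      |x (l k)| =
        Real.sqrt ((-1 : ℝ) ^ (k - 1) *
            (∏ i ∈ Finset.Icc 1 (k - 1), a (l i) (π (l i))) /
            (∏ i ∈ Finset.Icc 2 k, a (l i) (τ (l i)))) * |x (l 1)| := by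
  -- key relation along the cycle
  have key : ∀ k, 1 ≤ k → k ≤ p →
      a (l k) (π (l k)) * x (l k) ^ 2 +
        a (l (k + 1)) (τ (l (k + 1))) * x (l (k + 1)) ^ 2 = 0 := by
    intro k hk1 hkp
    have h0 := congrFun hx (π (l k))
    simp only [evolMul, Pi.zero_apply, mul_add, Finset.sum_add_distrib, mul_ite, mul_zero,
      Equiv.apply_eq_iff_eq_symm_apply, Finset.sum_ite_eq', Finset.mem_univ, if_true] at h0
    have e1 : π.symm (π (l k)) = l k := Equiv.symm_apply_apply _ _
    have e2 : τ.symm (π (l k)) = l (k + 1) := by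
      rw [hcyc k hk1 hkp]; exact Equiv.symm_apply_apply _ _
    rw [e1, e2] at h0
    linear_combination h0
  have hτne : ∀ i, 2 ≤ i → i ≤ p + 1 → a (l i) (τ (l i)) ≠ 0 := by
    intro i hi2 hip
    have h := ha (i - 1) (by omega) (by omega)
    have : i - 1 + 1 = i := by omega
    rw [this] at h
    intro h0
    rw [h0, mul_zero] at h
    exact lt_irrefl 0 h
  have hBne : ∀ k, k ≤ p + 1 → (∏ i ∈ Finset.Icc 2 k, a (l i) (τ (l i))) ≠ 0 := by
    intro k hk
    refine Finset.prod_ne_zero_iff.mpr fun i hi => ?_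
    rw [Finset.mem_Icc] at hi
    exact hτne i hi.1 (by omega)
  have main : ∀ k, 1 ≤ k → k ≤ p →
      x (l k) ^ 2 =
        ((-1 : ℝ) ^ (k - 1) * (∏ i ∈ Finset.Icc 1 (k - 1), a (l i) (π (l i))) /
          (∏ i ∈ Finset.Icc 2 k, a (l i) (τ (l i)))) * x (l 1) ^ 2 := by
    intro k hk1
    induction k, hk1 using Nat.le_induction with
    | base => intro _; simp
    | succ k hk ih =>
      intro hkp
      have hkp' : k ≤ p := by omega
      have hkey := key k hk hkp'
      have ihv := ih hkp'
      obtain ⟨m, rfl⟩ : ∃ m, k = m + 1 := ⟨k - 1, by omega⟩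
      have hB : (∏ i ∈ Finset.Icc 2 (m + 1), a (l i) (τ (l i))) ≠ 0 := hBne _ (by omega)
      have hv : a (l (m + 2)) (τ (l (m + 2))) ≠ 0 := hτne _ (by omega) (by omega)
      simp only [Nat.add_sub_cancel] at ihv ⊢
      rw [show m + 1 + 1 = m + 2 from rfl,
        Finset.prod_Icc_succ_top (show 1 ≤ m + 1 by omega),
        Finset.prod_Icc_succ_top (show 2 ≤ m + 2 by omega)]
      rw [div_mul_eq_mul_div, eq_div_iff hB] at ihv
      rw [div_mul_eq_mul_div, eq_div_iff (mul_ne_zero hB hv)]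
      linear_combination (-(a (l (m + 1)) (π (l (m + 1))))) * ihv +
        (∏ i ∈ Finset.Icc 2 (m + 1), a (l i) (τ (l i))) * hkey
  intro k hk2 hkp
  have hm := main k (by omega) hkp
  rw [← Real.sqrt_sq_eq_abs (x (l k)), hm, Real.sqrt_mul' _ (sq_nonneg _),
    Real.sqrt_sq_eq_abs]
end

section
/- Let a, b, c, d be nonzero reals. Real numbers (x, y) satisfy the system a x² + b y² = y and d x² + c y² = x if and only if x satisfies (bd − ac)² x⁴ − 2b(bd − ac) x³ + (b² + cd) x² − c x = 0 and y is determined accordingly (y = (x − d x²)/c when appropriate). In particular, every solution x of the system satisfies this quartic equation. -/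
/-! Subtracting `b` times the second equation from `c` times the first eliminates `y²` and leaves
`c y = b x - (bd - ac) x²`, so `y` is determined by `x`. Substituting this into `c` times the second
equation gives `(b x - (bd - ac) x²)² = c x - c d x²`, which expands to the quartic. -/

section EvolutionAlgebraIdempotent

variable {K : Type*} [Field K] {a b c d x y : K}

theorem idempotent_system_iff_linear_and_second (hc : c ≠ 0) :
    (a * x ^ 2 + b * y ^ 2 = y ∧ d * x ^ 2 + c * y ^ 2 = x) ↔
      (c * y = b * x - (b * d - a * c) * x ^ 2 ∧ d * x ^ 2 + c * y ^ 2 = x) := by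
  refine ⟨fun ⟨h₁, h₂⟩ => ⟨by linear_combination b * h₂ - c * h₁, h₂⟩, fun ⟨hy, h₂⟩ => ⟨?_, h₂⟩⟩
  refine mul_left_cancel₀ hc ?_
  linear_combination b * h₂ - hy

theorem second_eq_iff_sq_of_mul_eq (hc : c ≠ 0) {p : K} (hy : c * y = p) :
    d * x ^ 2 + c * y ^ 2 = x ↔ p ^ 2 = c * x - c * d * x ^ 2 := by
  rw [← hy]
  constructor
  · intro h
    linear_combination c * h
  · intro h
    refine mul_left_cancel₀ hc ?_
    linear_combination h

theorem idempotent_quartic_eq (a b c d x : K) :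
    (b * d - a * c) ^ 2 * x ^ 4 - 2 * b * (b * d - a * c) * x ^ 3 + (b ^ 2 + c * d) * x ^ 2 - c * x =
      (b * x - (b * d - a * c) * x ^ 2) ^ 2 - (c * x - c * d * x ^ 2) := by
  ring

end EvolutionAlgebraIdempotent

theorem stmt15_general (a b c d : ℝ) (hc : c ≠ 0)
    (x y : ℝ) :
    (a * x ^ 2 + b * y ^ 2 = y ∧ d * x ^ 2 + c * y ^ 2 = x) ↔
      ((b * d - a * c) ^ 2 * x ^ 4 - 2 * b * (b * d - a * c) * x ^ 3 +
          (b ^ 2 + c * d) * x ^ 2 - c * x = 0 ∧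
        y = (b * x - (b * d - a * c) * x ^ 2) / c) := by
  rw [idempotent_system_iff_linear_and_second hc, idempotent_quartic_eq, sub_eq_zero,
    eq_div_iff hc, mul_comm y c]
  exact and_comm.trans (and_congr_left fun hy => second_eq_iff_sq_of_mul_eq hc hy)

/-- The idempotent system `a x² + b y² = y`, `d x² + c y² = x` of the
2-dimensional evolution algebra of permutations (a,b,c,d nonzero) is equivalent
to the quartic `(bd-ac)² x⁴ - 2b(bd-ac) x³ + (b²+cd) x² - c x = 0` together with
`y` determined from `x`; in particular every solution `x` satisfies the quartic. -/
theorem stmt15 (a b c d : ℝ) (ha : a ≠ 0) (hb : b ≠ 0) (hc : c ≠ 0) (hd : d ≠ 0)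
    (x y : ℝ) :
    (a * x ^ 2 + b * y ^ 2 = y ∧ d * x ^ 2 + c * y ^ 2 = x) ↔
      ((b * d - a * c) ^ 2 * x ^ 4 - 2 * b * (b * d - a * c) * x ^ 3 +
          (b ^ 2 + c * d) * x ^ 2 - c * x = 0 ∧
        y = (b * x - (b * d - a * c) * x ^ 2) / c) :=
  stmt15_general a b c d hc x y
end

section
/- Let π, τ ∈ S_n with cycle decompositions π = π_1 ∘ ... ∘ π_r, τ = τ_1 ∘ ... ∘ τ_r, where for each i the cycles π_i and τ_i have the same support (the same underlying set of k_i elements), the supports partition {1,...,n}, and a_{i,π(i)} · a_{i,τ(i)} ≠ 0 for all i. Then E^n_{π,τ} is isomorphic as an algebra to the direct sum E^{k_1}_{π_1,τ_1} ⊕ E^{k_2}_{π_2,τ_2} ⊕ ... ⊕ E^{k_r}_{π_r,τ_r}. -/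
/-- Multiplication of the evolution subalgebra `E^{k_i}_{π_i,τ_i}` on the basis
vectors indexed by a (π- and τ-invariant) support `S`. -/
noncomputable def evolMulSub {n : ℕ} (π τ : Equiv.Perm (Fin n))
    (a : Fin n → Fin n → ℝ) (S : Finset (Fin n))
    (u v : {j // j ∈ S} → ℝ) : {j // j ∈ S} → ℝ :=
  fun k => ∑ j : {j // j ∈ S}, u j * v j *
    ((if π j.1 = k.1 then a j.1 (π j.1) else 0) +
      (if τ j.1 = k.1 then a j.1 (τ j.1) else 0))

/-- If `π` and `τ` decompose into cycles `π_i`, `τ_i` with common supports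
`S 1, ..., S r` partitioning `{1,...,n}`, and `a_{i,π(i)} * a_{i,τ(i)} ≠ 0` for
all `i`, then `E^n_{π,τ} ≅ E^{k_1}_{π_1,τ_1} ⊕ ... ⊕ E^{k_r}_{π_r,τ_r}`. -/
theorem stmt18 {n r : ℕ} (π τ : Equiv.Perm (Fin n)) (a : Fin n → Fin n → ℝ)
    (ha : ∀ i, a i (π i) * a i (τ i) ≠ 0)
    (S : Fin r → Finset (Fin n))
    (hdisj : ∀ i j, i ≠ j → Disjoint (S i) (S j))
    (hcover : ∀ m : Fin n, ∃ i, m ∈ S i)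
    (hπS : ∀ i, ∀ m ∈ S i, π m ∈ S i)
    (hτS : ∀ i, ∀ m ∈ S i, τ m ∈ S i)
    (hπcyc : ∀ i, ∀ m ∈ S i, ∀ m' ∈ S i, ∃ t : ℕ, (π ^ t) m = m')
    (hτcyc : ∀ i, ∀ m ∈ S i, ∀ m' ∈ S i, ∃ t : ℕ, (τ ^ t) m = m') :
    ∃ f : (Fin n → ℝ) ≃ₗ[ℝ] (∀ i : Fin r, {j // j ∈ S i} → ℝ),
      ∀ x y, f (evolMul π τ a x y) =
        fun i => evolMulSub π τ a (S i) (f x i) (f y i) := by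
  classical
  have hmem : ∀ m : Fin n, m ∈ S ((hcover m).choose) := fun m => (hcover m).choose_spec
  set idx : Fin n → Fin r := fun m => (hcover m).choose with hidx
  have huniq : ∀ (i : Fin r) (m : Fin n), m ∈ S i → idx m = i := by
    intro i m hm
    by_contra h
    exact (Finset.disjoint_left.mp (hdisj _ _ h) (hmem m)) hm
  have same : ∀ (m : Fin n) (i i' : Fin r), m ∈ S i → m ∈ S i' → i = i' :=
    fun m i i' h h' => (huniq i m h).symm.trans (huniq i' m h')
  refine ⟨{ toFun := fun x i j => x j.1
            map_add' := by intros; rfl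
            map_smul' := by intros; rfl
            invFun := fun p m => p (idx m) ⟨m, hmem m⟩
            left_inv := fun x => rfl
            right_inv := ?_ }, ?_⟩
  · intro p
    funext i j
    obtain ⟨m, hm⟩ := j
    simp only
    have h : idx m = i := huniq i m hm
    subst h
    rfl
  · intro x y
    funext i k
    show (∑ j, x j * y j *
        ((if π j = k.1 then a j (π j) else 0) + (if τ j = k.1 then a j (τ j) else 0))) =
      ∑ j : {j // j ∈ S i}, x j.1 * y j.1 *
        ((if π j.1 = k.1 then a j.1 (π j.1) else 0) + (if τ j.1 = k.1 then a j.1 (τ j.1) else 0))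
    rw [Finset.sum_coe_sort (S i)
      (fun j => x j * y j *
        ((if π j = k.1 then a j (π j) else 0) + (if τ j = k.1 then a j (τ j) else 0)))]
    refine (Finset.sum_subset (Finset.subset_univ (S i)) ?_).symm
    intro j _ hj
    have h1 : π j ≠ k.1 := by
      intro h
      have hk : k.1 ∈ S (idx j) := h ▸ hπS _ j (hmem j)
      exact hj ((same k.1 (idx j) i hk k.2) ▸ hmem j)
    have h2 : τ j ≠ k.1 := by
      intro h
      have hk : k.1 ∈ S (idx j) := h ▸ hτS _ j (hmem j)
      exact hj ((same k.1 (idx j) i hk k.2) ▸ hmem j)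
    simp [h1, h2]
end
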